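/- arXiv:1606.01027 — 2 statements merged into one kernel-verified Lean document; each statement's English description precedes it below -/
import Mathlib

section
/- On ℝ³, with V₀ := -k(x∂ₓ + y∂_y + 2z∂_z), V₁ := -y∂_z, V₂ := ∂_y + x∂_z, V₁₂ := ∂_z, and L := V₀ + V₁² + V₂², the following commutator identities hold on smooth functions: [V₁, L] = -k V₁ + 2 V₂∘V₁₂, [V₂, L] = -k V₂ - 2 V₁∘V₁₂, and [V₁₂, L] = -2k V₁₂. -/
/-- The action of a vector field `V` on a function `f` as a derivation:
`(V f)(p) = Df(p)(V(p))`. -/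
noncomputable def vact {E : Type*} [NormedAddCommGroup E] [NormedSpace ℝ E]
    (V : E → E) (f : E → ℝ) : E → ℝ :=
  fun p => fderiv ℝ f p (V p)

section helpers
variable {E : Type*} [NormedAddCommGroup E] [NormedSpace ℝ E]

lemma vact_contDiff {V : E → E} {f : E → ℝ} (hV : ContDiff ℝ (⊤ : ℕ∞) V) (hf : ContDiff ℝ (⊤ : ℕ∞) f) :
    ContDiff ℝ (⊤ : ℕ∞) (vact V f) :=
  (hf.fderiv_right (by simp)).clm_apply hV

lemma vact_add {V : E → E} {g h : E → ℝ} {p : E}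
    (hg : DifferentiableAt ℝ g p) (hh : DifferentiableAt ℝ h p) :
    vact V (fun q => g q + h q) p = vact V g p + vact V h p := by
  unfold vact
  rw [fderiv_fun_add hg hh]
  simp

lemma vact_sub {V : E → E} {g h : E → ℝ} {p : E}
    (hg : DifferentiableAt ℝ g p) (hh : DifferentiableAt ℝ h p) :
    vact V (fun q => g q - h q) p = vact V g p - vact V h p := by
  unfold vact
  rw [fderiv_fun_sub hg hh]
  simp

lemma vact_comm {V W : E → E} {f : E → ℝ} (hV : Differentiable ℝ V) (hW : Differentiable ℝ W)
    (hf : ContDiff ℝ (⊤ : ℕ∞) f) (p : E) :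
    vact V (vact W f) p - vact W (vact V f) p
      = fderiv ℝ f p (fderiv ℝ W p (V p) - fderiv ℝ V p (W p)) := by
  have hdf : Differentiable ℝ (fderiv ℝ f) := (hf.fderiv_right (m := 1) (by exact WithTop.coe_le_coe.mpr le_top)).differentiable one_ne_zero
  have hdf1 : Differentiable ℝ f := hf.differentiable (by simp)
  have h1 : fderiv ℝ (vact W f) p
      = (fderiv ℝ f p).comp (fderiv ℝ W p) + (fderiv ℝ (fderiv ℝ f) p).flip (W p) :=
    fderiv_clm_apply (hdf p) (hW p)
  have h2 : fderiv ℝ (vact V f) p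
      = (fderiv ℝ f p).comp (fderiv ℝ V p) + (fderiv ℝ (fderiv ℝ f) p).flip (V p) :=
    fderiv_clm_apply (hdf p) (hV p)
  have hsymm : fderiv ℝ (fderiv ℝ f) p (V p) (W p) = fderiv ℝ (fderiv ℝ f) p (W p) (V p) :=
    second_derivative_symmetric (fun y => (hdf1 y).hasFDerivAt) (hdf p).hasFDerivAt _ _
  show fderiv ℝ (vact W f) p (V p) - fderiv ℝ (vact V f) p (W p) = _
  rw [h1, h2]
  simp only [ContinuousLinearMap.add_apply, ContinuousLinearMap.comp_apply,
    ContinuousLinearMap.flip_apply, map_sub]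
  rw [hsymm]
  ring

lemma vact_comm_smul {V W Z : E → E} {f : E → ℝ} (hV : Differentiable ℝ V)
    (hW : Differentiable ℝ W) (hf : ContDiff ℝ (⊤ : ℕ∞) f) (c : ℝ)
    (hbr : ∀ q, fderiv ℝ W q (V q) - fderiv ℝ V q (W q) = c • Z q) (p : E) :
    vact V (vact W f) p - vact W (vact V f) p = c * vact Z f p := by
  rw [vact_comm hV hW hf p, hbr, map_smul]
  rfl

end helpers

open ContinuousLinearMap in
/-- On ℝ³, with `V₀ = -k(x∂ₓ + y∂_y + 2z∂_z)`, `V₁ = -y∂_z`,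
`V₂ = ∂_y + x∂_z`, `V₁₂ = ∂_z` and `L = V₀ + V₁² + V₂²`, on smooth functions:
`[V₁,L] = -kV₁ + 2V₂∘V₁₂`, `[V₂,L] = -kV₂ - 2V₁∘V₁₂`, `[V₁₂,L] = -2kV₁₂`. -/
theorem ufg_heisenberg_comm_with_L (k : ℝ) (hk : 0 < k)
    (V₀ V₁ V₂ V₁₂ : ℝ × ℝ × ℝ → ℝ × ℝ × ℝ)
    (hV₀ : V₀ = fun p => (-k * p.1, -k * p.2.1, -2 * k * p.2.2))
    (hV₁ : V₁ = fun p => (0, 0, -p.2.1))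
    (hV₂ : V₂ = fun p => (0, 1, p.1))
    (hV₁₂ : V₁₂ = fun _ => ((0 : ℝ), (0 : ℝ), (1 : ℝ)))
    (L : (ℝ × ℝ × ℝ → ℝ) → (ℝ × ℝ × ℝ → ℝ))
    (hL : L = fun f p =>
      vact V₀ f p + vact V₁ (vact V₁ f) p + vact V₂ (vact V₂ f) p) :
    ∀ f : ℝ × ℝ × ℝ → ℝ, ContDiff ℝ (⊤ : ℕ∞) f → ∀ p,
      (vact V₁ (L f) p - L (vact V₁ f) p
          = -k * vact V₁ f p + 2 * vact V₂ (vact V₁₂ f) p) ∧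
      (vact V₂ (L f) p - L (vact V₂ f) p
          = -k * vact V₂ f p - 2 * vact V₁ (vact V₁₂ f) p) ∧
      (vact V₁₂ (L f) p - L (vact V₁₂ f) p = -2 * k * vact V₁₂ f p) := by
  intro f hf p
  -- the continuous linear maps serving as derivatives of the vector fields
  set π₁ : ℝ×ℝ×ℝ →L[ℝ] ℝ := fst ℝ ℝ (ℝ×ℝ) with hπ₁
  set π₂ : ℝ×ℝ×ℝ →L[ℝ] ℝ := (fst ℝ ℝ ℝ).comp (snd ℝ ℝ (ℝ×ℝ)) with hπ₂
  set π₃ : ℝ×ℝ×ℝ →L[ℝ] ℝ := (snd ℝ ℝ ℝ).comp (snd ℝ ℝ (ℝ×ℝ)) with hπ₃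
  set T₀ : ℝ×ℝ×ℝ →L[ℝ] ℝ×ℝ×ℝ := ((-k) • π₁).prod (((-k) • π₂).prod ((-2*k) • π₃)) with hT₀
  set T₁ : ℝ×ℝ×ℝ →L[ℝ] ℝ×ℝ×ℝ :=
    (0 : ℝ×ℝ×ℝ →L[ℝ] ℝ).prod ((0 : ℝ×ℝ×ℝ →L[ℝ] ℝ).prod ((-1 : ℝ) • π₂)) with hT₁
  set T₂ : ℝ×ℝ×ℝ →L[ℝ] ℝ×ℝ×ℝ :=
    (0 : ℝ×ℝ×ℝ →L[ℝ] ℝ).prod ((0 : ℝ×ℝ×ℝ →L[ℝ] ℝ).prod π₁) with hT₂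
  have e₀ : V₀ = ⇑T₀ := by
    rw [hV₀]; funext p; simp [hT₀, hπ₁, hπ₂, hπ₃]
  have e₁ : V₁ = ⇑T₁ := by
    rw [hV₁]; funext p; simp [hT₁, hπ₂]
  have h₀ : ∀ q : ℝ×ℝ×ℝ, fderiv ℝ V₀ q = T₀ := by
    intro q; rw [e₀]; exact T₀.fderiv
  have h₁ : ∀ q : ℝ×ℝ×ℝ, fderiv ℝ V₁ q = T₁ := by
    intro q; rw [e₁]; exact T₁.fderiv
  have h₂ : ∀ q : ℝ×ℝ×ℝ, fderiv ℝ V₂ q = T₂ := by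
    intro q
    have h : HasFDerivAt V₂ T₂ q := by
      have : HasFDerivAt (fun x : ℝ×ℝ×ℝ => ((0:ℝ), (1:ℝ), (0:ℝ)) + T₂ x) T₂ q :=
        (T₂.hasFDerivAt (x := q)).const_add (((0:ℝ), (1:ℝ), (0:ℝ)))
      rw [hV₂]
      convert this using 2 with r
      simp [hT₂, hπ₁, Prod.ext_iff]
    exact h.fderiv
  have h₁₂ : ∀ q : ℝ×ℝ×ℝ, fderiv ℝ V₁₂ q = 0 := by
    intro q; rw [hV₁₂]; exact (hasFDerivAt_const _ _).fderiv
  -- smoothness of the fields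
  have hc₀ : ContDiff ℝ (⊤ : ℕ∞) V₀ := by rw [e₀]; exact T₀.contDiff
  have hc₁ : ContDiff ℝ (⊤ : ℕ∞) V₁ := by rw [e₁]; exact T₁.contDiff
  have hc₂ : ContDiff ℝ (⊤ : ℕ∞) V₂ := by
    rw [hV₂]
    exact contDiff_const.prodMk (contDiff_const.prodMk contDiff_fst)
  have hc₁₂ : ContDiff ℝ (⊤ : ℕ∞) V₁₂ := by rw [hV₁₂]; exact contDiff_const
  have hd₀ : Differentiable ℝ V₀ := hc₀.differentiable (by simp)
  have hd₁ : Differentiable ℝ V₁ := hc₁.differentiable (by simp)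
  have hd₂ : Differentiable ℝ V₂ := hc₂.differentiable (by simp)
  have hd₁₂ : Differentiable ℝ V₁₂ := hc₁₂.differentiable (by simp)
  -- Lie brackets of the fields
  have b10 : ∀ q, fderiv ℝ V₀ q (V₁ q) - fderiv ℝ V₁ q (V₀ q) = (-k) • V₁ q := by
    intro q
    rw [h₀ q, h₁ q]
    simp only [hV₀, hV₁]
    simp [hT₀, hT₁, hπ₁, hπ₂, hπ₃, Prod.ext_iff]
    ring
  have b20 : ∀ q, fderiv ℝ V₀ q (V₂ q) - fderiv ℝ V₂ q (V₀ q) = (-k) • V₂ q := by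
    intro q
    rw [h₀ q, h₂ q]
    simp only [hV₀, hV₂]
    simp [hT₀, hT₂, hπ₁, hπ₂, hπ₃, Prod.ext_iff]
    ring
  have b120 : ∀ q, fderiv ℝ V₀ q (V₁₂ q) - fderiv ℝ V₁₂ q (V₀ q) = (-2*k) • V₁₂ q := by
    intro q
    rw [h₀ q, h₁₂ q]
    simp only [hV₁₂]
    simp [hT₀, hπ₁, hπ₂, hπ₃, Prod.ext_iff]
  have b12 : ∀ q, fderiv ℝ V₂ q (V₁ q) - fderiv ℝ V₁ q (V₂ q) = (1:ℝ) • V₁₂ q := by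
    intro q
    rw [h₂ q, h₁ q]
    simp only [hV₁, hV₂, hV₁₂]
    simp [hT₁, hT₂, hπ₁, hπ₂, Prod.ext_iff]
  have b21 : ∀ q, fderiv ℝ V₁ q (V₂ q) - fderiv ℝ V₂ q (V₁ q) = (-1:ℝ) • V₁₂ q := by
    intro q
    rw [h₂ q, h₁ q]
    simp only [hV₁, hV₂, hV₁₂]
    simp [hT₁, hT₂, hπ₁, hπ₂, Prod.ext_iff]
  have b121 : ∀ q, fderiv ℝ V₁ q (V₁₂ q) - fderiv ℝ V₁₂ q (V₁ q) = (0:ℝ) • V₁₂ q := by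
    intro q
    rw [h₁ q, h₁₂ q]
    simp only [hV₁₂]
    simp [hT₁, hπ₂, Prod.ext_iff]
  have b122 : ∀ q, fderiv ℝ V₂ q (V₁₂ q) - fderiv ℝ V₁₂ q (V₂ q) = (0:ℝ) • V₁₂ q := by
    intro q
    rw [h₂ q, h₁₂ q]
    simp only [hV₁₂]
    simp [hT₂, hπ₁, Prod.ext_iff]
  -- smoothness of iterated actions
  have s1 : ContDiff ℝ (⊤ : ℕ∞) (vact V₁ f) := vact_contDiff hc₁ hf
  have s2 : ContDiff ℝ (⊤ : ℕ∞) (vact V₂ f) := vact_contDiff hc₂ hf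
  have s12 : ContDiff ℝ (⊤ : ℕ∞) (vact V₁₂ f) := vact_contDiff hc₁₂ hf
  have s11 : ContDiff ℝ (⊤ : ℕ∞) (vact V₁ (vact V₁ f)) := vact_contDiff hc₁ s1
  have s22 : ContDiff ℝ (⊤ : ℕ∞) (vact V₂ (vact V₂ f)) := vact_contDiff hc₂ s2
  -- expansion of the operator L
  have hexp : ∀ (V : ℝ×ℝ×ℝ → ℝ×ℝ×ℝ) (g : ℝ×ℝ×ℝ → ℝ), ContDiff ℝ (⊤ : ℕ∞) g →
      vact V (fun q => vact V₀ g q + vact V₁ (vact V₁ g) q + vact V₂ (vact V₂ g) q) p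
        = vact V (vact V₀ g) p + vact V (vact V₁ (vact V₁ g)) p
          + vact V (vact V₂ (vact V₂ g)) p := by
    intro V g hg
    have d0 : Differentiable ℝ (vact V₀ g) := (vact_contDiff hc₀ hg).differentiable (by simp)
    have d11 : Differentiable ℝ (vact V₁ (vact V₁ g)) :=
      (vact_contDiff hc₁ (vact_contDiff hc₁ hg)).differentiable (by simp)
    have d22 : Differentiable ℝ (vact V₂ (vact V₂ g)) :=
      (vact_contDiff hc₂ (vact_contDiff hc₂ hg)).differentiable (by simp)
    rw [vact_add (g := fun q => vact V₀ g q + vact V₁ (vact V₁ g) q) ((d0.add d11) p) (d22 p), vact_add (d0 p) (d11 p)]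
  simp only [hL]
  refine ⟨?_, ?_, ?_⟩
  · -- [V₁, L]
    rw [hexp V₁ f hf]
    have hA1 : vact V₁ (vact V₀ f) p - vact V₀ (vact V₁ f) p = -k * vact V₁ f p :=
      vact_comm_smul hd₁ hd₀ hf (-k) b10 p
    have hC1 : vact V₁ (vact V₂ (vact V₂ f)) p - vact V₂ (vact V₁ (vact V₂ f)) p
        = 1 * vact V₁₂ (vact V₂ f) p := vact_comm_smul hd₁ hd₂ s2 1 b12 p
    have hC2 : ∀ q, vact V₁₂ (vact V₂ f) q = vact V₂ (vact V₁₂ f) q := by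
      intro q
      have := vact_comm_smul hd₁₂ hd₂ hf 0 b122 q
      rw [zero_mul] at this
      linarith
    have hC3 : vact V₁ (vact V₂ f) = fun q => vact V₂ (vact V₁ f) q + vact V₁₂ f q := by
      funext q
      have := vact_comm_smul hd₁ hd₂ hf 1 b12 q
      rw [one_mul] at this
      linarith
    have hC4 : vact V₂ (vact V₁ (vact V₂ f)) p
        = vact V₂ (vact V₂ (vact V₁ f)) p + vact V₂ (vact V₁₂ f) p := by
      rw [hC3]
      exact vact_add (((vact_contDiff hc₂ s1).differentiable (by simp)) p)
        ((s12.differentiable (by simp)) p)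
    linarith [hC2 p]
  · -- [V₂, L]
    rw [hexp V₂ f hf]
    have hA2 : vact V₂ (vact V₀ f) p - vact V₀ (vact V₂ f) p = -k * vact V₂ f p :=
      vact_comm_smul hd₂ hd₀ hf (-k) b20 p
    have hB1 : vact V₂ (vact V₁ (vact V₁ f)) p - vact V₁ (vact V₂ (vact V₁ f)) p
        = -1 * vact V₁₂ (vact V₁ f) p := vact_comm_smul hd₂ hd₁ s1 (-1) b21 p
    have hB2 : ∀ q, vact V₁₂ (vact V₁ f) q = vact V₁ (vact V₁₂ f) q := by
      intro q
      have := vact_comm_smul hd₁₂ hd₁ hf 0 b121 q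
      rw [zero_mul] at this
      linarith
    have hB3 : vact V₂ (vact V₁ f) = fun q => vact V₁ (vact V₂ f) q - vact V₁₂ f q := by
      funext q
      have := vact_comm_smul hd₂ hd₁ hf (-1) b21 q
      linarith
    have hB4 : vact V₁ (vact V₂ (vact V₁ f)) p
        = vact V₁ (vact V₁ (vact V₂ f)) p - vact V₁ (vact V₁₂ f) p := by
      rw [hB3]
      exact vact_sub (((vact_contDiff hc₁ s2).differentiable (by simp)) p)
        ((s12.differentiable (by simp)) p)
    linarith [hB2 p]
  · -- [V₁₂, L]
    rw [hexp V₁₂ f hf]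
    have hA3 : vact V₁₂ (vact V₀ f) p - vact V₀ (vact V₁₂ f) p = -2*k * vact V₁₂ f p :=
      vact_comm_smul hd₁₂ hd₀ hf (-2*k) b120 p
    have hD1 : vact V₁₂ (vact V₁ (vact V₁ f)) p - vact V₁ (vact V₁₂ (vact V₁ f)) p
        = 0 * vact V₁₂ (vact V₁ f) p := vact_comm_smul hd₁₂ hd₁ s1 0 b121 p
    have hE1 : vact V₁₂ (vact V₂ (vact V₂ f)) p - vact V₂ (vact V₁₂ (vact V₂ f)) p
        = 0 * vact V₁₂ (vact V₂ f) p := vact_comm_smul hd₁₂ hd₂ s2 0 b122 p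
    have hD2 : vact V₁₂ (vact V₁ f) = vact V₁ (vact V₁₂ f) := by
      funext q
      have := vact_comm_smul hd₁₂ hd₁ hf 0 b121 q
      rw [zero_mul] at this
      linarith
    have hE2 : vact V₁₂ (vact V₂ f) = vact V₂ (vact V₁₂ f) := by
      funext q
      have := vact_comm_smul hd₁₂ hd₂ hf 0 b122 q
      rw [zero_mul] at this
      linarith
    have hD3 : vact V₁ (vact V₁₂ (vact V₁ f)) p = vact V₁ (vact V₁ (vact V₁₂ f)) p := by
      rw [hD2]
    have hE3 : vact V₂ (vact V₁₂ (vact V₂ f)) p = vact V₂ (vact V₂ (vact V₁₂ f)) p := by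
      rw [hE2]
    linarith
end

section
/- Let u : [0,∞) × ℝ² → ℝ be smooth and satisfy ∂ₜ u = L u where L = kx∂ₓ + (x∂_y)², k > 0. Then the function g(t,x,y) := |x ∂_y u(t,x,y)|² satisfies the pointwise differential inequality (-L + ∂ₜ) g ≤ -2k g. -/
noncomputable def DD (a : ℝ × (ℝ × ℝ)) (f : ℝ × (ℝ × ℝ) → ℝ) : ℝ × (ℝ × ℝ) → ℝ :=
  fun q => fderiv ℝ f q a

lemma contDiff_DD {f : ℝ × (ℝ × ℝ) → ℝ} (hf : ContDiff ℝ (⊤ : ℕ∞) f) (a : ℝ × (ℝ × ℝ)) :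
    ContDiff ℝ (⊤ : ℕ∞) (DD a f) :=
  (hf.fderiv_right (by simp)).clm_apply contDiff_const

lemma DD_symm {f : ℝ × (ℝ × ℝ) → ℝ} (hf : ContDiff ℝ (⊤ : ℕ∞) f) (a b q) :
    DD a (DD b f) q = DD b (DD a f) q := by
  have hd : DifferentiableAt ℝ (fderiv ℝ f) q :=
    ((hf.fderiv_right (m := 1) (WithTop.coe_le_coe.mpr le_top)).differentiable (n := 1) (by simp)).differentiableAt
  have key : ∀ c d : ℝ × (ℝ × ℝ), DD c (DD d f) q = fderiv ℝ (fderiv ℝ f) q c d := by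
    intro c d
    have h := fderiv_clm_apply (c := fderiv ℝ f) (u := fun _ => d) hd (differentiableAt_const d)
    show fderiv ℝ (fun y => (fderiv ℝ f y) ((fun _ => d) y)) q c = _
    rw [h]
    simp
  rw [key, key]
  exact (hf.contDiffAt.isSymmSndFDerivAt (by rw [minSmoothness_of_isRCLikeNormedField]; exact WithTop.coe_le_coe.mpr le_top)) a b

lemma slice_spaceDiff {f : ℝ × (ℝ × ℝ) → ℝ} (hf : ContDiff ℝ (⊤ : ℕ∞) f) (t : ℝ) (p : ℝ × ℝ) :
    DifferentiableAt ℝ (fun p' : ℝ × ℝ => f (t, p')) p :=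
  (hf.differentiable (by simp) (t, p)).comp p (DifferentiableAt.prodMk (differentiableAt_const t) differentiableAt_id)

lemma fderiv_slice {f : ℝ × (ℝ × ℝ) → ℝ} (hf : ContDiff ℝ (⊤ : ℕ∞) f) (t : ℝ) (p : ℝ × ℝ)
    (v : ℝ × ℝ) :
    fderiv ℝ (fun p' : ℝ × ℝ => f (t, p')) p v = fderiv ℝ f (t, p) ((0 : ℝ), v) := by
  have h1 : HasFDerivAt (fun p' : ℝ × ℝ => ((t, p') : ℝ × (ℝ × ℝ)))
      (((0 : ℝ × ℝ →L[ℝ] ℝ)).prod (ContinuousLinearMap.id ℝ (ℝ × ℝ))) p :=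
    HasFDerivAt.prodMk (hasFDerivAt_const t p) (hasFDerivAt_id p)
  have h2 : HasFDerivAt (fun p' : ℝ × ℝ => f (t, p'))
      ((fderiv ℝ f (t, p)).comp (((0 : ℝ × ℝ →L[ℝ] ℝ)).prod (ContinuousLinearMap.id ℝ (ℝ × ℝ)))) p :=
    (hf.differentiable (by simp) (t, p)).hasFDerivAt.comp p h1
  rw [h2.fderiv]
  simp

lemma hasDerivAt_slice {f : ℝ × (ℝ × ℝ) → ℝ} (hf : ContDiff ℝ (⊤ : ℕ∞) f) (t : ℝ) (p : ℝ × ℝ) :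
    HasDerivAt (fun s : ℝ => f (s, p)) (fderiv ℝ f (t, p) ((1:ℝ),((0:ℝ),(0:ℝ)))) t := by
  have h1 : HasFDerivAt (fun s : ℝ => ((s, p) : ℝ × (ℝ × ℝ)))
      ((ContinuousLinearMap.id ℝ ℝ).prod (0 : ℝ →L[ℝ] ℝ × ℝ)) t :=
    HasFDerivAt.prodMk (hasFDerivAt_id t) (hasFDerivAt_const p t)
  have h2 : HasFDerivAt (fun s : ℝ => f (s, p))
      ((fderiv ℝ f (t, p)).comp ((ContinuousLinearMap.id ℝ ℝ).prod (0 : ℝ →L[ℝ] ℝ × ℝ))) t :=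
    (hf.differentiable (by simp) (t, p)).hasFDerivAt.comp t h1
  have h3 := h2.hasDerivAt
  have h4 : ((fderiv ℝ f (t, p)).comp
      ((ContinuousLinearMap.id ℝ ℝ).prod (0 : ℝ →L[ℝ] ℝ × ℝ))) 1 = fderiv ℝ f (t, p) ((1:ℝ),((0:ℝ),(0:ℝ))) := by
    simp
    rfl
  rwa [h4] at h3

lemma fderiv_mul_apply' {G : Type*} [NormedAddCommGroup G] [NormedSpace ℝ G]
    {c d : G → ℝ} {p : G} (hc : DifferentiableAt ℝ c p) (hd : DifferentiableAt ℝ d p)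
    (v : G) :
    fderiv ℝ (fun y => c y * d y) p v = c p * fderiv ℝ d p v + d p * fderiv ℝ c p v := by
  rw [fderiv_fun_mul hc hd]
  simp

lemma fderiv_add_apply' {G : Type*} [NormedAddCommGroup G] [NormedSpace ℝ G]
    {c d : G → ℝ} {p : G} (hc : DifferentiableAt ℝ c p) (hd : DifferentiableAt ℝ d p)
    (v : G) :
    fderiv ℝ (fun y => c y + d y) p v = fderiv ℝ c p v + fderiv ℝ d p v := by
  rw [fderiv_fun_add hc hd]
  simp

lemma fderiv_sq_apply {G : Type*} [NormedAddCommGroup G] [NormedSpace ℝ G]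
    {m : G → ℝ} {p : G} (hm : DifferentiableAt ℝ m p) (v : G) :
    fderiv ℝ (fun y => (m y)^2 : G → ℝ) p v = 2 * m p * fderiv ℝ m p v := by
  have h : (fun y => (m y)^2 : G → ℝ) = fun y => m y * m y := by
    funext y; ring
  rw [h, fderiv_mul_apply' hm hm v]
  ring

lemma fderiv_fst_apply (p v : ℝ × ℝ) : fderiv ℝ (fun q : ℝ × ℝ => q.1) p v = v.1 := by
  rw [show (fun q : ℝ × ℝ => q.1) = Prod.fst from rfl, fderiv_fst]
  rfl

lemma fderiv_sndfst_apply (q v : ℝ × (ℝ × ℝ)) :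
    fderiv ℝ (fun r : ℝ × (ℝ × ℝ) => r.2.1) q v = v.2.1 := by
  have h : HasFDerivAt (fun r : ℝ × (ℝ × ℝ) => r.2.1)
      ((ContinuousLinearMap.fst ℝ ℝ ℝ).comp (ContinuousLinearMap.snd ℝ ℝ (ℝ × ℝ))) q :=
    ((ContinuousLinearMap.fst ℝ ℝ ℝ).comp (ContinuousLinearMap.snd ℝ ℝ (ℝ × ℝ))).hasFDerivAt
  rw [h.fderiv]
  rfl

lemma fderiv_x2mul {f : ℝ × (ℝ × ℝ) → ℝ} (hf : ContDiff ℝ (⊤ : ℕ∞) f) (q v : ℝ × (ℝ × ℝ)) :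
    fderiv ℝ (fun r => r.2.1 * f r) q v = q.2.1 * fderiv ℝ f q v + f q * v.2.1 := by
  rw [fderiv_mul_apply' (differentiableAt_snd.fst) (hf.differentiable (by simp) q) v,
    fderiv_sndfst_apply]

lemma vactV1_slice {V₁ : ℝ × ℝ → ℝ × ℝ} (hV₁ : V₁ = fun p => (0, p.1))
    {F : ℝ × (ℝ × ℝ) → ℝ} (hF : ContDiff ℝ (⊤ : ℕ∞) F) (t : ℝ) (p : ℝ × ℝ) :
    vact V₁ (fun p' : ℝ × ℝ => F (t, p')) p = p.1 * DD ((0:ℝ),((0:ℝ),(1:ℝ))) F (t, p) := by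
  show fderiv ℝ (fun p' : ℝ × ℝ => F (t, p')) p (V₁ p) = _
  have h0 : V₁ p = p.1 • ((0:ℝ),(1:ℝ)) := by simp [hV₁]
  rw [h0, map_smul, fderiv_slice hF t p]
  simp [DD]

lemma vactV0_slice (k : ℝ) {V₀ : ℝ × ℝ → ℝ × ℝ} (hV₀ : V₀ = fun p => (k * p.1, 0))
    {F : ℝ × (ℝ × ℝ) → ℝ} (hF : ContDiff ℝ (⊤ : ℕ∞) F) (t : ℝ) (p : ℝ × ℝ) :
    vact V₀ (fun p' : ℝ × ℝ => F (t, p')) p = k * p.1 * DD ((0:ℝ),((1:ℝ),(0:ℝ))) F (t, p) := by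
  show fderiv ℝ (fun p' : ℝ × ℝ => F (t, p')) p (V₀ p) = _
  have h0 : V₀ p = (k * p.1) • ((1:ℝ),(0:ℝ)) := by simp [hV₀]
  rw [h0, map_smul, fderiv_slice hF t p]
  simp [DD]

lemma fderiv_cmul_apply {G : Type*} [NormedAddCommGroup G] [NormedSpace ℝ G]
    {d : G → ℝ} {p : G} (hd : DifferentiableAt ℝ d p) (c : ℝ) (v : G) :
    fderiv ℝ (fun y => c * d y) p v = c * fderiv ℝ d p v := by
  rw [fderiv_const_mul hd c]
  simp

/-- Let `u : [0,∞) × ℝ² → ℝ` be smooth and solve `∂ₜu = Lu`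
with `L = kx∂ₓ + (x∂_y)²`, k > 0.  Then `g(t,x,y) := |x∂_y u(t,x,y)|²`
satisfies pointwise `(-L + ∂ₜ) g ≤ -2k g` for `t ≥ 0`. -/
theorem grusin_gamma_decay (k : ℝ) (hk : 0 < k)
    (V₀ V₁ : ℝ × ℝ → ℝ × ℝ)
    (hV₀ : V₀ = fun p => (k * p.1, 0))
    (hV₁ : V₁ = fun p => (0, p.1))
    (L : (ℝ × ℝ → ℝ) → (ℝ × ℝ → ℝ))
    (hL : L = fun f p => vact V₀ f p + vact V₁ (vact V₁ f) p)
    (u : ℝ → ℝ × ℝ → ℝ)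
    (hu : ContDiff ℝ (⊤ : ℕ∞) (fun q : ℝ × (ℝ × ℝ) => u q.1 q.2))
    (hpde : ∀ t, 0 ≤ t → ∀ p, deriv (fun s => u s p) t = L (u t) p)
    (g : ℝ → ℝ × ℝ → ℝ)
    (hg : g = fun t p => (vact V₁ (u t) p) ^ 2) :
    ∀ t, 0 ≤ t → ∀ p,
      -(L (g t) p) + deriv (fun s => g s p) t ≤ -2 * k * g t p := by
  intro t ht p
  have hW : ContDiff ℝ (⊤ : ℕ∞) (Function.uncurry u) := hu
  have hA : ContDiff ℝ (⊤ : ℕ∞) (DD ((0:ℝ),((0:ℝ),(1:ℝ))) (Function.uncurry u)) := contDiff_DD hW ((0:ℝ),((0:ℝ),(1:ℝ)))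
  have hB : ContDiff ℝ (⊤ : ℕ∞) (DD ((0:ℝ),((0:ℝ),(1:ℝ))) (DD ((0:ℝ),((0:ℝ),(1:ℝ))) (Function.uncurry u))) := contDiff_DD hA ((0:ℝ),((0:ℝ),(1:ℝ)))
  have hG : ContDiff ℝ (⊤ : ℕ∞) (fun q : ℝ × (ℝ × ℝ) => (q.2.1 * (DD ((0:ℝ),((0:ℝ),(1:ℝ))) (Function.uncurry u)) q)^2) := ((contDiff_snd.fst).mul hA).pow 2
  have hDDG : ∀ v q : ℝ × (ℝ × ℝ), DD v (fun q : ℝ × (ℝ × ℝ) => (q.2.1 * (DD ((0:ℝ),((0:ℝ),(1:ℝ))) (Function.uncurry u)) q)^2) q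
      = 2 * (q.2.1 * (DD ((0:ℝ),((0:ℝ),(1:ℝ))) (Function.uncurry u)) q) * (q.2.1 * DD v (DD ((0:ℝ),((0:ℝ),(1:ℝ))) (Function.uncurry u)) q + (DD ((0:ℝ),((0:ℝ),(1:ℝ))) (Function.uncurry u)) q * v.2.1) := by
    intro v q
    show fderiv ℝ (fun r : ℝ × (ℝ × ℝ) => (r.2.1 * (DD ((0:ℝ),((0:ℝ),(1:ℝ))) (Function.uncurry u)) r)^2) q v = _
    rw [fderiv_sq_apply ((differentiableAt_snd.fst).fun_mul ((hA.differentiable (by simp)) q)) v,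
      fderiv_x2mul hA q v]
    rfl
  have h1 : ∀ (s : ℝ) (p' : ℝ × ℝ), vact V₁ (u s) p' = p'.1 * (DD ((0:ℝ),((0:ℝ),(1:ℝ))) (Function.uncurry u)) (s, p') :=
    fun s p' => vactV1_slice hV₁ hW s p'
  have hg1 : ∀ s : ℝ, g s = fun p' : ℝ × ℝ => (fun q : ℝ × (ℝ × ℝ) => (q.2.1 * (DD ((0:ℝ),((0:ℝ),(1:ℝ))) (Function.uncurry u)) q)^2) (s, p') := by
    intro s
    funext p'
    simp only [hg]
    rw [h1 s p']
  have hT1 : vact V₀ (g t) p = k * p.1 * DD ((0:ℝ),((1:ℝ),(0:ℝ))) (fun q : ℝ × (ℝ × ℝ) => (q.2.1 * (DD ((0:ℝ),((0:ℝ),(1:ℝ))) (Function.uncurry u)) q)^2) (t, p) := by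
    rw [hg1 t]
    exact vactV0_slice k hV₀ hG t p
  have hvg : vact V₁ (g t) = fun p' : ℝ × ℝ => (fun q : ℝ × (ℝ × ℝ) => q.2.1 * DD ((0:ℝ),((0:ℝ),(1:ℝ))) (fun q : ℝ × (ℝ × ℝ) => (q.2.1 * (DD ((0:ℝ),((0:ℝ),(1:ℝ))) (Function.uncurry u)) q)^2) q) (t, p') := by
    funext p'
    rw [hg1 t]
    rw [vactV1_slice hV₁ hG t p']
  have hHsm : ContDiff ℝ (⊤ : ℕ∞) (fun q : ℝ × (ℝ × ℝ) => q.2.1 * DD ((0:ℝ),((0:ℝ),(1:ℝ))) (fun q : ℝ × (ℝ × ℝ) => (q.2.1 * (DD ((0:ℝ),((0:ℝ),(1:ℝ))) (Function.uncurry u)) q)^2) q) := (contDiff_snd.fst).mul (contDiff_DD hG ((0:ℝ),((0:ℝ),(1:ℝ))))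
  have hT2 : vact V₁ (vact V₁ (g t)) p = p.1 * DD ((0:ℝ),((0:ℝ),(1:ℝ))) (fun q : ℝ × (ℝ × ℝ) => q.2.1 * DD ((0:ℝ),((0:ℝ),(1:ℝ))) (fun q : ℝ × (ℝ × ℝ) => (q.2.1 * (DD ((0:ℝ),((0:ℝ),(1:ℝ))) (Function.uncurry u)) q)^2) q) (t, p) := by
    rw [hvg]
    exact vactV1_slice hV₁ hHsm t p
  have hDDYH : DD ((0:ℝ),((0:ℝ),(1:ℝ))) (fun q : ℝ × (ℝ × ℝ) => q.2.1 * DD ((0:ℝ),((0:ℝ),(1:ℝ))) (fun q : ℝ × (ℝ × ℝ) => (q.2.1 * (DD ((0:ℝ),((0:ℝ),(1:ℝ))) (Function.uncurry u)) q)^2) q) (t, p)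
      = p.1 * DD ((0:ℝ),((0:ℝ),(1:ℝ))) (DD ((0:ℝ),((0:ℝ),(1:ℝ))) (fun q : ℝ × (ℝ × ℝ) => (q.2.1 * (DD ((0:ℝ),((0:ℝ),(1:ℝ))) (Function.uncurry u)) q)^2)) (t, p) + DD ((0:ℝ),((0:ℝ),(1:ℝ))) (fun q : ℝ × (ℝ × ℝ) => (q.2.1 * (DD ((0:ℝ),((0:ℝ),(1:ℝ))) (Function.uncurry u)) q)^2) (t, p) * 0 :=
    fderiv_x2mul (contDiff_DD hG ((0:ℝ),((0:ℝ),(1:ℝ)))) (t, p) ((0:ℝ),((0:ℝ),(1:ℝ)))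
  have hGy : DD ((0:ℝ),((0:ℝ),(1:ℝ))) (fun q : ℝ × (ℝ × ℝ) => (q.2.1 * (DD ((0:ℝ),((0:ℝ),(1:ℝ))) (Function.uncurry u)) q)^2) = fun q : ℝ × (ℝ × ℝ) =>
      2 * (q.2.1 * (DD ((0:ℝ),((0:ℝ),(1:ℝ))) (Function.uncurry u)) q) * (q.2.1 * (DD ((0:ℝ),((0:ℝ),(1:ℝ))) (DD ((0:ℝ),((0:ℝ),(1:ℝ))) (Function.uncurry u))) q) := by
    funext q
    rw [hDDG ((0:ℝ),((0:ℝ),(1:ℝ))) q]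
    norm_num
  have hGyy : DD ((0:ℝ),((0:ℝ),(1:ℝ))) (DD ((0:ℝ),((0:ℝ),(1:ℝ))) (fun q : ℝ × (ℝ × ℝ) => (q.2.1 * (DD ((0:ℝ),((0:ℝ),(1:ℝ))) (Function.uncurry u)) q)^2)) (t, p)
      = 2 * (p.1 * (DD ((0:ℝ),((0:ℝ),(1:ℝ))) (Function.uncurry u)) (t, p)) * (p.1 * DD ((0:ℝ),((0:ℝ),(1:ℝ))) (DD ((0:ℝ),((0:ℝ),(1:ℝ))) (DD ((0:ℝ),((0:ℝ),(1:ℝ))) (Function.uncurry u))) (t, p))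
        + (p.1 * (DD ((0:ℝ),((0:ℝ),(1:ℝ))) (DD ((0:ℝ),((0:ℝ),(1:ℝ))) (Function.uncurry u))) (t, p)) * (2 * (p.1 * (DD ((0:ℝ),((0:ℝ),(1:ℝ))) (DD ((0:ℝ),((0:ℝ),(1:ℝ))) (Function.uncurry u))) (t, p))) := by
    rw [hGy]
    show fderiv ℝ (fun q : ℝ × (ℝ × ℝ) =>
      2 * (q.2.1 * (DD ((0:ℝ),((0:ℝ),(1:ℝ))) (Function.uncurry u)) q) * (q.2.1 * (DD ((0:ℝ),((0:ℝ),(1:ℝ))) (DD ((0:ℝ),((0:ℝ),(1:ℝ))) (Function.uncurry u))) q)) (t, p) ((0:ℝ),((0:ℝ),(1:ℝ))) = _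
    rw [fderiv_mul_apply'
        (((differentiableAt_snd.fst).fun_mul ((hA.differentiable (by simp)) (t, p))).const_mul 2)
        ((differentiableAt_snd.fst).fun_mul ((hB.differentiable (by simp)) (t, p))) ((0:ℝ),((0:ℝ),(1:ℝ))),
      fderiv_cmul_apply ((differentiableAt_snd.fst).fun_mul ((hA.differentiable (by simp)) (t, p))) 2 ((0:ℝ),((0:ℝ),(1:ℝ))),
      fderiv_x2mul hA (t, p) ((0:ℝ),((0:ℝ),(1:ℝ))), fderiv_x2mul hB (t, p) ((0:ℝ),((0:ℝ),(1:ℝ)))]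
    rw [show fderiv ℝ (DD ((0:ℝ),((0:ℝ),(1:ℝ))) (DD ((0:ℝ),((0:ℝ),(1:ℝ))) (Function.uncurry u))) (t, p) ((0:ℝ),((0:ℝ),(1:ℝ))) = DD ((0:ℝ),((0:ℝ),(1:ℝ))) (DD ((0:ℝ),((0:ℝ),(1:ℝ))) (DD ((0:ℝ),((0:ℝ),(1:ℝ))) (Function.uncurry u))) (t, p) from rfl,
      show fderiv ℝ (DD ((0:ℝ),((0:ℝ),(1:ℝ))) (Function.uncurry u)) (t, p) ((0:ℝ),((0:ℝ),(1:ℝ))) = DD ((0:ℝ),((0:ℝ),(1:ℝ))) (DD ((0:ℝ),((0:ℝ),(1:ℝ))) (Function.uncurry u)) (t, p) from rfl]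
    norm_num
  have hT3 : deriv (fun s => g s p) t = DD ((1:ℝ),((0:ℝ),(0:ℝ))) (fun q : ℝ × (ℝ × ℝ) => (q.2.1 * (DD ((0:ℝ),((0:ℝ),(1:ℝ))) (Function.uncurry u)) q)^2) (t, p) := by
    have hfun : (fun s : ℝ => g s p) = fun s : ℝ => (fun q : ℝ × (ℝ × ℝ) => (q.2.1 * (DD ((0:ℝ),((0:ℝ),(1:ℝ))) (Function.uncurry u)) q)^2) (s, p) :=
      funext fun s => by rw [hg1 s]
    rw [hfun]
    exact (hasDerivAt_slice hG t p).deriv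
  -- the PDE in joint coordinates
  have hM : ContDiff ℝ (⊤ : ℕ∞) (fun q : ℝ × (ℝ × ℝ) => q.2.1 * (DD ((0:ℝ),((0:ℝ),(1:ℝ))) (Function.uncurry u)) q) := (contDiff_snd.fst).mul hA
  have h5 : vact V₁ (u t) = fun p' : ℝ × ℝ => (fun q : ℝ × (ℝ × ℝ) => q.2.1 * (DD ((0:ℝ),((0:ℝ),(1:ℝ))) (Function.uncurry u)) q) (t, p') := by
    funext p'
    rw [h1 t p']
  have hTW : ContDiff ℝ (⊤ : ℕ∞) (DD ((1:ℝ),((0:ℝ),(0:ℝ))) (Function.uncurry u)) := contDiff_DD hW ((1:ℝ),((0:ℝ),(0:ℝ)))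
  have hXW : ContDiff ℝ (⊤ : ℕ∞) (DD ((0:ℝ),((1:ℝ),(0:ℝ))) (Function.uncurry u)) := contDiff_DD hW ((0:ℝ),((1:ℝ),(0:ℝ)))
  have hPDEj : (fun p' : ℝ × ℝ => DD ((1:ℝ),((0:ℝ),(0:ℝ))) (Function.uncurry u) (t, p'))
      = fun p' : ℝ × ℝ => k * p'.1 * DD ((0:ℝ),((1:ℝ),(0:ℝ))) (Function.uncurry u) (t, p') + p'.1 * p'.1 * (DD ((0:ℝ),((0:ℝ),(1:ℝ))) (DD ((0:ℝ),((0:ℝ),(1:ℝ))) (Function.uncurry u))) (t, p') := by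
    funext p'
    have h4 : deriv (fun s => u s p') t = DD ((1:ℝ),((0:ℝ),(0:ℝ))) (Function.uncurry u) (t, p') :=
      (hasDerivAt_slice hW t p').deriv
    rw [← h4, hpde t ht p']
    simp only [hL]
    have h6 : vact V₀ (u t) p' = k * p'.1 * DD ((0:ℝ),((1:ℝ),(0:ℝ))) (Function.uncurry u) (t, p') := vactV0_slice k hV₀ hW t p'
    have h7 : vact V₁ (vact V₁ (u t)) p' = p'.1 * DD ((0:ℝ),((0:ℝ),(1:ℝ))) (fun q : ℝ × (ℝ × ℝ) => q.2.1 * (DD ((0:ℝ),((0:ℝ),(1:ℝ))) (Function.uncurry u)) q) (t, p') := by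
      rw [h5]
      exact vactV1_slice hV₁ hM t p'
    have h8 : DD ((0:ℝ),((0:ℝ),(1:ℝ))) (fun q : ℝ × (ℝ × ℝ) => q.2.1 * (DD ((0:ℝ),((0:ℝ),(1:ℝ))) (Function.uncurry u)) q) (t, p') = p'.1 * (DD ((0:ℝ),((0:ℝ),(1:ℝ))) (DD ((0:ℝ),((0:ℝ),(1:ℝ))) (Function.uncurry u))) (t, p') + (DD ((0:ℝ),((0:ℝ),(1:ℝ))) (Function.uncurry u)) (t, p') * 0 :=
      fderiv_x2mul hA (t, p') ((0:ℝ),((0:ℝ),(1:ℝ)))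
    rw [h6, h7, h8]
    ring
  have hsym : fderiv ℝ (DD ((0:ℝ),((1:ℝ),(0:ℝ))) (Function.uncurry u)) (t, p) ((0:ℝ),((0:ℝ),(1:ℝ))) = DD ((0:ℝ),((1:ℝ),(0:ℝ))) (DD ((0:ℝ),((0:ℝ),(1:ℝ))) (Function.uncurry u)) (t, p) :=
    DD_symm hW ((0:ℝ),((0:ℝ),(1:ℝ))) ((0:ℝ),((1:ℝ),(0:ℝ))) (t, p)
  have hb' : fderiv ℝ (DD ((0:ℝ),((0:ℝ),(1:ℝ))) (DD ((0:ℝ),((0:ℝ),(1:ℝ))) (Function.uncurry u))) (t, p) ((0:ℝ),((0:ℝ),(1:ℝ))) = DD ((0:ℝ),((0:ℝ),(1:ℝ))) (DD ((0:ℝ),((0:ℝ),(1:ℝ))) (DD ((0:ℝ),((0:ℝ),(1:ℝ))) (Function.uncurry u))) (t, p) := rfl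
  have hAt : DD ((1:ℝ),((0:ℝ),(0:ℝ))) (DD ((0:ℝ),((0:ℝ),(1:ℝ))) (Function.uncurry u)) (t, p)
      = k * p.1 * DD ((0:ℝ),((1:ℝ),(0:ℝ))) (DD ((0:ℝ),((0:ℝ),(1:ℝ))) (Function.uncurry u)) (t, p) + p.1 * p.1 * DD ((0:ℝ),((0:ℝ),(1:ℝ))) (DD ((0:ℝ),((0:ℝ),(1:ℝ))) (DD ((0:ℝ),((0:ℝ),(1:ℝ))) (Function.uncurry u))) (t, p) := by
    have h0 : DD ((1:ℝ),((0:ℝ),(0:ℝ))) (DD ((0:ℝ),((0:ℝ),(1:ℝ))) (Function.uncurry u)) (t, p) = DD ((0:ℝ),((0:ℝ),(1:ℝ))) (DD ((1:ℝ),((0:ℝ),(0:ℝ))) (Function.uncurry u)) (t, p) := DD_symm hW ((1:ℝ),((0:ℝ),(0:ℝ))) ((0:ℝ),((0:ℝ),(1:ℝ))) (t, p)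
    have h2 : fderiv ℝ (fun p' : ℝ × ℝ => DD ((1:ℝ),((0:ℝ),(0:ℝ))) (Function.uncurry u) (t, p')) p ((0:ℝ),(1:ℝ))
        = DD ((0:ℝ),((0:ℝ),(1:ℝ))) (DD ((1:ℝ),((0:ℝ),(0:ℝ))) (Function.uncurry u)) (t, p) := fderiv_slice hTW t p ((0:ℝ),(1:ℝ))
    rw [h0, ← h2, hPDEj]
    rw [fderiv_add_apply'
        ((differentiableAt_fst.const_mul k).fun_mul (slice_spaceDiff hXW t p))
        ((differentiableAt_fst.fun_mul differentiableAt_fst).fun_mul (slice_spaceDiff hB t p)) ((0:ℝ),(1:ℝ)),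
      fderiv_mul_apply' (differentiableAt_fst.const_mul k) (slice_spaceDiff hXW t p) ((0:ℝ),(1:ℝ)),
      fderiv_mul_apply' (differentiableAt_fst.fun_mul differentiableAt_fst)
        (slice_spaceDiff hB t p) ((0:ℝ),(1:ℝ)),
      fderiv_slice hXW t p ((0:ℝ),(1:ℝ)), fderiv_slice hB t p ((0:ℝ),(1:ℝ)),
      fderiv_cmul_apply differentiableAt_fst k ((0:ℝ),(1:ℝ)),
      fderiv_mul_apply' differentiableAt_fst differentiableAt_fst ((0:ℝ),(1:ℝ)),
      fderiv_fst_apply, hsym, hb']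
    norm_num
  -- final assembly
  have hgtp : g t p = (p.1 * (DD ((0:ℝ),((0:ℝ),(1:ℝ))) (Function.uncurry u)) (t, p))^2 := by
    rw [hg1 t]
  simp only [hL]
  rw [hT1, hT2, hT3, hgtp, hDDG ((0:ℝ),((1:ℝ),(0:ℝ))) (t, p), hDDG ((1:ℝ),((0:ℝ),(0:ℝ))) (t, p), hDDYH, hGyy,
    hDDG ((0:ℝ),((0:ℝ),(1:ℝ))) (t, p), hAt]
  norm_num
  nlinarith [sq_nonneg (p.1 * p.1 * (DD ((0:ℝ),((0:ℝ),(1:ℝ))) (DD ((0:ℝ),((0:ℝ),(1:ℝ))) (Function.uncurry u))) (t, p))]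
end
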